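/- Conversely to tropicalization: let P be a polynomial over Puiseux series, p⁺, p⁻ as above, and y ∈ ℝⁿ a point with p⁺(y) > p⁻(y). Then for the monomial lift x with x_k = t^{y_k}, we have P(x) > 0. -/

import Mathlib

noncomputable section
open scoped Classical

/-- The field of (formal generalized real) Puiseux series, realized as Hahn series
over `ℝ` with exponents in `ℝᵒᵈ`: the support of a series is well-ordered for the
*reversed* order of `ℝ`, so that each nonzero series has a term of greatest real
exponent (its leading term), the exponents being a strictly decreasing (finite or
unbounded) family of reals. -/
abbrev PS : Type := HahnSeries ℝᵒᵈ ℝ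

namespace PS

/-- The leading coefficient of a Puiseux series (`0` for the zero series). -/
def lc (x : PS) : ℝ := x.coeff x.order

/-- The valuation of a Puiseux series: its greatest exponent, with `val 0 = ⊥ = -∞`. -/
def val (x : PS) : WithBot ℝ :=
  if x = 0 then ⊥ else (OrderDual.ofDual x.order : ℝ)

/-- The real-valued valuation (greatest exponent), with junk value `0` at `0`. -/
def valR (x : PS) : ℝ := OrderDual.ofDual x.order

/-- A Puiseux series is nonnegative when its leading coefficient is nonnegative. -/
def Nonneg (x : PS) : Prop := 0 ≤ lc x

/-- A Puiseux series is positive when its leading coefficient is positive. -/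
def Pos (x : PS) : Prop := 0 < lc x

/-- The order of the field of Puiseux series: `x ≤ y` iff `y - x` is nonnegative. -/
def le (x y : PS) : Prop := Nonneg (y - x)

/-- The strict order of the field of Puiseux series. -/
def lt (x y : PS) : Prop := Pos (y - x)

/-- The positive monomial `t^r`. -/
def tpow (r : ℝ) : PS := HahnSeries.single (OrderDual.toDual r) 1

end PS

section Poly

/- A polynomial `P = ∑ i, c i * X^(α i)` over the Puiseux series in `n` variables is
represented by a finite family of coefficients `c : Fin N → PS` and multi-indices
`α : Fin N → Fin n → ℕ`. -/
variable {n N : ℕ} (c : Fin N → PS) (α : Fin N → Fin n → ℕ)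

/-- `P⁺`: the sum of the monomials of `P` with (strictly) positive coefficient,
evaluated at `x`. -/
def Pplus (x : Fin n → PS) : PS :=
  ∑ i ∈ Finset.univ.filter (fun i => PS.Pos (c i)), c i * ∏ k, x k ^ α i k

/-- `P⁻`: minus the sum of the monomials of `P` with negative coefficient,
evaluated at `x`; thus `P = P⁺ - P⁻`. -/
def Pminus (x : Fin n → PS) : PS :=
  ∑ i ∈ Finset.univ.filter (fun i => PS.Pos (-(c i))), (-(c i)) * ∏ k, x k ^ α i k

/-- The tropical polynomial `p⁺` associated with `P⁺` (coefficients replaced by their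
valuations), evaluated tropically (max-plus) at a point of `(ℝ ∪ {-∞})ⁿ`. -/
def tropPlus (y : Fin n → WithBot ℝ) : WithBot ℝ :=
  (Finset.univ.filter (fun i => PS.Pos (c i))).sup
    (fun i => (PS.valR (c i) : WithBot ℝ) + ∑ k, α i k • y k)

/-- The tropical polynomial `p⁻` associated with `P⁻`, evaluated tropically. -/
def tropMinus (y : Fin n → WithBot ℝ) : WithBot ℝ :=
  (Finset.univ.filter (fun i => PS.Pos (-(c i)))).sup
    (fun i => (PS.valR (-(c i)) : WithBot ℝ) + ∑ k, α i k • y k)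

end Poly

/-! The Puiseux series ordered by the sign of the leading coefficient form Mathlib's
lexicographically ordered field `Lex ℝ⟦ℝᵒᵈ⟧`. At the monomial lift every monomial of `P⁺`
is positive, so `P⁺(x)` dominates the monomial `m` realizing the maximum `p⁺(y)`, whose
valuation is `p⁺(y)`. Every monomial of `P⁻` has valuation at most `p⁻(y) < p⁺(y)`, hence so
does `P⁻(x)`, and a series of strictly smaller valuation than `m` is smaller than `m` in
absolute value. Thus `P⁻(x) < m ≤ P⁺(x)`. -/

open HahnSeries Finset

namespace HahnSeries

variable {Γ R : Type*} [LinearOrder Γ]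

theorem lt_orderTop_sum [AddCommMonoid R] {ι : Type*} (s : Finset ι) (f : ι → R⟦Γ⟧)
    {g : WithTop Γ} (hg : g < ⊤) (h : ∀ i ∈ s, g < (f i).orderTop) :
    g < (∑ i ∈ s, f i).orderTop :=
  sum_induction f (fun x => g < x.orderTop)
    (fun _ _ hx hy => (lt_min hx hy).trans_le min_orderTop_le_orderTop_add) (by simpa) h

theorem abs_toLex_sum_lt [AddCommGroup R] [LinearOrder R] [IsOrderedAddMonoid R] {ι : Type*}
    (s : Finset ι) (f : ι → R⟦Γ⟧) {x : R⟦Γ⟧} (hx : x ≠ 0)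
    (h : ∀ i ∈ s, x.orderTop < (f i).orderTop) :
    |toLex (∑ i ∈ s, f i)| < |toLex x| :=
  abs_lt_abs_of_orderTop_ofLex (lt_orderTop_sum s f (orderTop_lt_top.mpr hx) h)

end HahnSeries

namespace PS

theorem pos_iff_toLex_pos (x : PS) : PS.Pos x ↔ 0 < toLex x := by
  rw [PS.Pos, PS.lc, ← leadingCoeff_eq]
  exact leadingCoeff_pos_iff

theorem Pos.ne_zero {x : PS} (hx : PS.Pos x) : x ≠ 0 := by
  rintro rfl
  exact (pos_iff_toLex_pos 0).mp hx |>.false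

theorem toLex_tpow_pos (r : ℝ) : 0 < toLex (tpow r) := by
  rw [← pos_iff_toLex_pos, PS.Pos, PS.lc, ← leadingCoeff_eq, tpow, leadingCoeff_of_single]
  exact one_pos

theorem orderTop_mul_tpow {x : PS} (hx : x ≠ 0) (e : ℝ) :
    (x * tpow e).orderTop = OrderDual.toDual (valR x + e) := by
  rw [orderTop_mul, tpow, orderTop_single one_ne_zero, ← order_eq_orderTop_of_ne_zero hx]
  rfl

theorem tpow_add (a b : ℝ) : tpow (a + b) = tpow a * tpow b := by
  rw [tpow, tpow, tpow, single_mul_single, one_mul]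
  rfl

theorem tpow_nsmul (m : ℕ) (r : ℝ) : tpow (m • r) = tpow r ^ m := by
  rw [tpow, tpow, single_pow, one_pow]
  rfl

theorem tpow_sum {ι : Type*} (s : Finset ι) (f : ι → ℝ) :
    tpow (∑ i ∈ s, f i) = ∏ i ∈ s, tpow (f i) := by
  induction s using Finset.cons_induction with
  | empty => rfl
  | cons i s hi ih => rw [sum_cons, prod_cons, tpow_add, ih]

end PS

section Poly

variable {n N : ℕ} (c : Fin N → PS) (α : Fin N → Fin n → ℕ) (y : Fin n → ℝ)

theorem Pminus_eq_Pplus_neg (x : Fin n → PS) : Pminus c α x = Pplus (-c) α x := rfl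

theorem Pplus_tpow : Pplus c α (fun k => PS.tpow (y k)) =
    ∑ i ∈ univ.filter (fun i => PS.Pos (c i)), c i * PS.tpow (∑ k, α i k • y k) := by
  simp only [Pplus, PS.tpow_sum, PS.tpow_nsmul]

theorem tropPlus_coe : tropPlus c α (fun k => (y k : WithBot ℝ)) =
    (univ.filter (fun i => PS.Pos (c i))).sup
      (fun i => ((PS.valR (c i) + ∑ k, α i k • y k : ℝ) : WithBot ℝ)) := by
  simp only [tropPlus]
  push_cast
  rfl

theorem le_tropPlus_coe {i : Fin N} (hi : PS.Pos (c i)) :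
    ↑(PS.valR (c i) + ∑ k, α i k • y k) ≤ tropPlus c α (fun k => (y k : WithBot ℝ)) := by
  rw [tropPlus_coe]
  exact le_sup (f := fun i => ((PS.valR (c i) + ∑ k, α i k • y k : ℝ) : WithBot ℝ))
    (mem_filter.mpr ⟨mem_univ i, hi⟩)

theorem exists_tropPlus_coe_eq (h : tropPlus c α (fun k => (y k : WithBot ℝ)) ≠ ⊥) :
    ∃ i, PS.Pos (c i) ∧
      tropPlus c α (fun k => (y k : WithBot ℝ)) = ↑(PS.valR (c i) + ∑ k, α i k • y k) := by
  rw [tropPlus_coe] at h ⊢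
  have hne : (univ.filter fun i => PS.Pos (c i)).Nonempty := by
    contrapose! h
    rw [h, sup_empty]
  obtain ⟨i, hi, hmax⟩ := exists_mem_eq_sup _ hne
    (fun i => ((PS.valR (c i) + ∑ k, α i k • y k : ℝ) : WithBot ℝ))
  exact ⟨i, (mem_filter.mp hi).2, hmax⟩

theorem term_le_Pplus_tpow {i : Fin N} (hi : PS.Pos (c i)) :
    toLex (c i * PS.tpow (∑ k, α i k • y k)) ≤ toLex (Pplus c α (fun k => PS.tpow (y k))) := by
  rw [Pplus_tpow]
  refine single_le_sum (f := fun j => toLex (c j * PS.tpow (∑ k, α j k • y k)))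
    (fun j hj => (mul_pos ((PS.pos_iff_toLex_pos _).mp (mem_filter.mp hj).2)
      (PS.toLex_tpow_pos _)).le) (mem_filter.mpr ⟨mem_univ i, hi⟩)

end Poly

/-- Conversely: let `P = P⁺ - P⁻` be a polynomial over the Puiseux
series, `p⁺, p⁻` the associated tropical polynomials, and `y ∈ ℝⁿ` a point with
`p⁺(y) > p⁻(y)`.  Then the monomial lift `x` with `x_k = t^{y_k}` satisfies `P(x) > 0`. -/
theorem PS.eval_pos_of_trop_gt {n N : ℕ} (c : Fin N → PS) (α : Fin N → Fin n → ℕ)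
    (y : Fin n → ℝ)
    (hy : tropMinus c α (fun k => (y k : WithBot ℝ)) <
          tropPlus c α (fun k => (y k : WithBot ℝ))) :
    PS.lt 0 (Pplus c α (fun k => PS.tpow (y k)) - Pminus c α (fun k => PS.tpow (y k))) := by
  set E : Fin N → ℝ := fun i => ∑ k, α i k • y k
  obtain ⟨i₀, hi₀, hmax⟩ := exists_tropPlus_coe_eq c α y (ne_bot_of_gt hy)
  have hlead : 0 < toLex (c i₀ * PS.tpow (E i₀)) :=
    mul_pos ((PS.pos_iff_toLex_pos _).mp hi₀) (PS.toLex_tpow_pos _)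
  have hgap : ∀ j, PS.Pos (-c j) → PS.valR (-c j) + E j < PS.valR (c i₀) + E i₀ := by
    intro j hj
    exact_mod_cast (le_tropPlus_coe (-c) α y hj).trans_lt (hy.trans_eq hmax)
  have hsmall :
      |toLex (Pminus c α (fun k => PS.tpow (y k)))| < toLex (c i₀ * PS.tpow (E i₀)) := by
    rw [← abs_of_pos hlead, Pminus_eq_Pplus_neg, Pplus_tpow]
    refine abs_toLex_sum_lt _ _ hlead.ne' fun j hj => ?_
    have hj : PS.Pos ((-c) j) := (mem_filter.mp hj).2
    rw [PS.orderTop_mul_tpow hi₀.ne_zero, PS.orderTop_mul_tpow hj.ne_zero,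
      WithTop.coe_lt_coe, OrderDual.toDual_lt_toDual]
    exact hgap j hj
  rw [PS.lt, sub_zero, PS.pos_iff_toLex_pos, toLex_sub, sub_pos]
  calc toLex (Pminus c α (fun k => PS.tpow (y k)))
      ≤ |toLex (Pminus c α (fun k => PS.tpow (y k)))| := le_abs_self _
    _ < toLex (c i₀ * PS.tpow (E i₀)) := hsmall
    _ ≤ toLex (Pplus c α (fun k => PS.tpow (y k))) := term_le_Pplus_tpow c α y hi₀
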